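/- (Normalization constraint in commutant form) A family A : I → (H →L[ℂ] H) satisfies L(A) = id_H if and only if Tr[C ∘ (Σ_{i ∈ I} A i)] = Tr[C] for every operator C in the commutant of U. -/

import Mathlib

open ContinuousLinearMap

/-- The linear map `L(A) = (1/|G|) · Σ_{i ∈ I} Σ_{g ∈ G} (U g) ∘ (A i) ∘ (U g)†`
associated to a family of operators `A : I → (H →L[ℂ] H)`. -/
noncomputable def Lmap {H : Type*} [NormedAddCommGroup H] [InnerProductSpace ℂ H]
    [FiniteDimensional ℂ H] {G : Type*} [Group G] [Fintype G] {I : Type*} [Fintype I]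
    (U : G → (H →L[ℂ] H)) (A : I → (H →L[ℂ] H)) : H →L[ℂ] H :=
  (Fintype.card G : ℂ)⁻¹ •
    ∑ i : I, ∑ g : G, U g ∘L A i ∘L ContinuousLinearMap.adjoint (U g)

/-- The convex set `𝒞` of block operators corresponding to covariant POVMs with
outcome space `I × G`: families `A` with every `A i` positive semidefinite and `L(A) = 1`. -/
def covSet {H : Type*} [NormedAddCommGroup H] [InnerProductSpace ℂ H]
    [FiniteDimensional ℂ H] {G : Type*} [Group G] [Fintype G] {I : Type*} [Fintype I]
    (U : G → (H →L[ℂ] H)) : Set (I → (H →L[ℂ] H)) :=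
  {A | (∀ i, (A i).IsPositive) ∧ Lmap U A = 1}

/-- If `Tr[D† D] = 0` then `D = 0`. -/
theorem eq_zero_of_trace_adjoint_comp_self_eq_zero
    {H : Type*} [NormedAddCommGroup H] [InnerProductSpace ℂ H] [FiniteDimensional ℂ H]
    (D : H →L[ℂ] H)
    (h : LinearMap.trace ℂ H ((ContinuousLinearMap.adjoint D ∘L D : H →L[ℂ] H) : H →ₗ[ℂ] H) = 0) :
    D = 0 := by
  rcases subsingleton_or_nontrivial H with h'|h'
  · ext x; exact Subsingleton.elim _ _
  · let b := stdOrthonormalBasis ℂ H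
    have ht : LinearMap.trace ℂ H ((ContinuousLinearMap.adjoint D ∘L D : H →L[ℂ] H) : H →ₗ[ℂ] H)
        = ∑ i, (‖D (b i)‖ : ℂ)^2 := by
      rw [LinearMap.trace_eq_matrix_trace ℂ b.toBasis, Matrix.trace]
      congr 1
      ext i
      rw [Matrix.diag_apply, LinearMap.toMatrix_apply]
      rw [b.coe_toBasis_repr_apply, b.coe_toBasis]
      rw [b.repr_apply_apply]
      simp only [ContinuousLinearMap.toLinearMap_comp, LinearMap.comp_apply, ContinuousLinearMap.coe_coe]
      rw [ContinuousLinearMap.adjoint_inner_right]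
      rw [inner_self_eq_norm_sq_to_K]
      norm_cast
    rw [ht] at h
    have hre : ∑ i, ‖D (b i)‖^2 = 0 := by
      have := congrArg Complex.re h
      simpa [← Complex.ofReal_pow] using this
    have hz : ∀ i, D (b i) = 0 := by
      intro i
      have := (Finset.sum_eq_zero_iff_of_nonneg (fun i _ => by positivity)).mp hre i
        (Finset.mem_univ i)
      simpa [pow_eq_zero_iff] using this
    ext x
    have : (D : H →ₗ[ℂ] H) = 0 := b.toBasis.ext fun i => by simpa using hz i
    simpa using LinearMap.congr_fun this x

/-- For `C` in the commutant, `Tr[C ∘ L(A)] = Tr[C ∘ Σ_i A i]`. -/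
theorem trace_comp_Lmap
    {H : Type*} [NormedAddCommGroup H] [InnerProductSpace ℂ H] [FiniteDimensional ℂ H]
    {G : Type*} [Group G] [Fintype G] {I : Type*} [Fintype I]
    (U : G → (H →L[ℂ] H))
    (hU2 : ∀ g, ContinuousLinearMap.adjoint (U g) ∘L U g = 1)
    (A : I → (H →L[ℂ] H)) (C : H →L[ℂ] H) (hC : ∀ g, C ∘L U g = U g ∘L C) :
    LinearMap.trace ℂ H ((C ∘L Lmap U A : H →L[ℂ] H) : H →ₗ[ℂ] H) =
      LinearMap.trace ℂ H ((C ∘L ∑ i, A i : H →L[ℂ] H) : H →ₗ[ℂ] H) := by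
  have hcard : (Fintype.card G : ℂ) ≠ 0 := by
    exact_mod_cast Nat.cast_ne_zero.mpr Fintype.card_ne_zero
  have key : ∀ (g : G) (i : I),
      LinearMap.trace ℂ H
        ((C ∘L (U g ∘L A i ∘L ContinuousLinearMap.adjoint (U g)) : H →L[ℂ] H) : H →ₗ[ℂ] H) =
      LinearMap.trace ℂ H ((C ∘L A i : H →L[ℂ] H) : H →ₗ[ℂ] H) := by
    intro g i
    have h1 : C ∘L (U g ∘L A i ∘L ContinuousLinearMap.adjoint (U g)) =
        (U g ∘L C ∘L A i) ∘L ContinuousLinearMap.adjoint (U g) := by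
      rw [← ContinuousLinearMap.comp_assoc (U g) C (A i), ← hC g]
      rw [ContinuousLinearMap.comp_assoc, ContinuousLinearMap.comp_assoc]
    have h2 : (ContinuousLinearMap.adjoint (U g)) ∘L (U g ∘L C ∘L A i) = C ∘L A i := by
      rw [← ContinuousLinearMap.comp_assoc, ← ContinuousLinearMap.comp_assoc, hU2 g]
      rw [ContinuousLinearMap.comp_assoc]
      exact (C ∘L A i).id_comp
    rw [h1, ContinuousLinearMap.toLinearMap_comp, LinearMap.trace_comp_comm',
      ← ContinuousLinearMap.toLinearMap_comp, h2]
  have e1 : C ∘L Lmap U A = (Fintype.card G : ℂ)⁻¹ •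
      ∑ i : I, ∑ g : G, C ∘L (U g ∘L A i ∘L ContinuousLinearMap.adjoint (U g)) := by
    rw [Lmap, ContinuousLinearMap.comp_smulₛₗ]
    simp only [RingHom.id_apply]
    congr 1
    rw [ContinuousLinearMap.comp_finset_sum]
    exact Finset.sum_congr rfl fun i _ => ContinuousLinearMap.comp_finset_sum ..
  calc LinearMap.trace ℂ H ((C ∘L Lmap U A : H →L[ℂ] H) : H →ₗ[ℂ] H)
      = (Fintype.card G : ℂ)⁻¹ * ∑ i : I, ∑ g : G, LinearMap.trace ℂ H
          ((C ∘L (U g ∘L A i ∘L ContinuousLinearMap.adjoint (U g)) : H →L[ℂ] H) : H →ₗ[ℂ] H) := by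
        rw [e1, ContinuousLinearMap.coe_smul, map_smul, smul_eq_mul]
        congr 1
        rw [ContinuousLinearMap.coe_sum, map_sum]
        exact Finset.sum_congr rfl fun i _ => by rw [ContinuousLinearMap.coe_sum, map_sum]
    _ = (Fintype.card G : ℂ)⁻¹ * ∑ i : I, ∑ _g : G,
          LinearMap.trace ℂ H ((C ∘L A i : H →L[ℂ] H) : H →ₗ[ℂ] H) := by
        congr 1
        exact Finset.sum_congr rfl fun i _ => Finset.sum_congr rfl fun g _ => key g i
    _ = (Fintype.card G : ℂ)⁻¹ * ((Fintype.card G : ℂ) *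
          ∑ i : I, LinearMap.trace ℂ H ((C ∘L A i : H →L[ℂ] H) : H →ₗ[ℂ] H)) := by
        simp [Finset.sum_const, Finset.mul_sum, mul_comm]
    _ = ∑ i : I, LinearMap.trace ℂ H ((C ∘L A i : H →L[ℂ] H) : H →ₗ[ℂ] H) := by
        rw [← mul_assoc, inv_mul_cancel₀ hcard, one_mul]
    _ = LinearMap.trace ℂ H ((C ∘L ∑ i, A i : H →L[ℂ] H) : H →ₗ[ℂ] H) := by
        rw [ContinuousLinearMap.comp_finset_sum, ContinuousLinearMap.coe_sum, map_sum]

/-- (Normalization constraint in commutant form) A family `A` satisfies `L(A) = 1` if and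
only if `Tr[C ∘ (Σ_i A i)] = Tr[C]` for every `C` in the commutant of `U`. -/
theorem Lmap_eq_one_iff_trace_commutant
    {H : Type*} [NormedAddCommGroup H] [InnerProductSpace ℂ H] [FiniteDimensional ℂ H]
    [Nontrivial H]
    {G : Type*} [Group G] [Fintype G] {I : Type*} [Fintype I] [Nonempty I]
    (U : G → (H →L[ℂ] H))
    (hU1 : ∀ g, U g ∘L ContinuousLinearMap.adjoint (U g) = 1)
    (hU2 : ∀ g, ContinuousLinearMap.adjoint (U g) ∘L U g = 1)
    (hUm : ∀ g h, U (g * h) = U g ∘L U h)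
    (A : I → (H →L[ℂ] H)) :
    Lmap U A = 1 ↔
      ∀ C : H →L[ℂ] H, (∀ g, C ∘L U g = U g ∘L C) →
        LinearMap.trace ℂ H ((C ∘L ∑ i, A i : H →L[ℂ] H) : H →ₗ[ℂ] H) =
          LinearMap.trace ℂ H (C : H →ₗ[ℂ] H) := by
  constructor
  · intro hL C hC
    rw [← trace_comp_Lmap U hU2 A C hC, hL, ContinuousLinearMap.one_def, ContinuousLinearMap.comp_id]
  · intro hyp
    -- L(A) is in the commutant
    have hLcomm : ∀ h : G, Lmap U A ∘L U h = U h ∘L Lmap U A := by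
      intro h
      have hconj : U h ∘L Lmap U A ∘L ContinuousLinearMap.adjoint (U h) = Lmap U A := by
        rw [Lmap]
        rw [ContinuousLinearMap.smul_comp, ContinuousLinearMap.comp_smulₛₗ]
        simp only [RingHom.id_apply]
        congr 1
        rw [ContinuousLinearMap.finset_sum_comp, ContinuousLinearMap.comp_finset_sum]
        refine Finset.sum_congr rfl fun i _ => ?_
        rw [ContinuousLinearMap.finset_sum_comp, ContinuousLinearMap.comp_finset_sum]
        refine Fintype.sum_bijective (fun g => h * g) (Group.mulLeft_bijective h) _ _
          fun g => ?_
        rw [hUm h g, ContinuousLinearMap.adjoint_comp]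
        simp only [ContinuousLinearMap.comp_assoc]
      calc Lmap U A ∘L U h
          = (U h ∘L Lmap U A ∘L ContinuousLinearMap.adjoint (U h)) ∘L U h := by rw [hconj]
        _ = U h ∘L Lmap U A ∘L (ContinuousLinearMap.adjoint (U h) ∘L U h) := by
            simp only [ContinuousLinearMap.comp_assoc]
        _ = U h ∘L Lmap U A := by rw [hU2 h, ContinuousLinearMap.one_def, ContinuousLinearMap.comp_id]
    set D : H →L[ℂ] H := Lmap U A - 1 with hDdef
    have hDcomm : ∀ g, D ∘L U g = U g ∘L D := by
      intro g
      rw [hDdef, ContinuousLinearMap.sub_comp, ContinuousLinearMap.comp_sub, hLcomm g,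
        ContinuousLinearMap.one_def, ContinuousLinearMap.id_comp, ContinuousLinearMap.comp_id]
    set C : H →L[ℂ] H := ContinuousLinearMap.adjoint D with hCdef
    have hCcomm : ∀ g, C ∘L U g = U g ∘L C := by
      intro g
      have h1 : ContinuousLinearMap.adjoint (U g) ∘L C = C ∘L ContinuousLinearMap.adjoint (U g) := by
        have := congrArg ContinuousLinearMap.adjoint (hDcomm g)
        rwa [ContinuousLinearMap.adjoint_comp, ContinuousLinearMap.adjoint_comp] at this
      calc C ∘L U g = ((U g ∘L ContinuousLinearMap.adjoint (U g)) ∘L C) ∘L U g := by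
            rw [hU1 g, ContinuousLinearMap.one_def, ContinuousLinearMap.id_comp]
        _ = U g ∘L (ContinuousLinearMap.adjoint (U g) ∘L C) ∘L U g := by
            simp only [ContinuousLinearMap.comp_assoc]
        _ = U g ∘L (C ∘L ContinuousLinearMap.adjoint (U g)) ∘L U g := by rw [h1]
        _ = U g ∘L C ∘L (ContinuousLinearMap.adjoint (U g) ∘L U g) := by
            simp only [ContinuousLinearMap.comp_assoc]
        _ = U g ∘L C := by rw [hU2 g, ContinuousLinearMap.one_def, ContinuousLinearMap.comp_id]
    have htr : LinearMap.trace ℂ H ((C ∘L D : H →L[ℂ] H) : H →ₗ[ℂ] H) = 0 := by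
      have h1 := trace_comp_Lmap U hU2 A C hCcomm
      have h2 := hyp C hCcomm
      have h3 : C ∘L D = C ∘L Lmap U A - C := by
        rw [hDdef, ContinuousLinearMap.comp_sub, ContinuousLinearMap.one_def,
          ContinuousLinearMap.comp_id]
      rw [h3, ContinuousLinearMap.coe_sub, map_sub, h1, h2, sub_self]
    have hD0 : D = 0 := eq_zero_of_trace_adjoint_comp_self_eq_zero D (by rw [← hCdef]; exact htr)
    have := sub_eq_zero.mp (hDdef ▸ hD0)
    exact this
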